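/- For θ ∈ [0, π/4] and s, x ∈ [0,1], let r_θ(x) ∈ [0,1] satisfy cos θ · cos(π r_θ(x)) = sin θ · cos(π x), and set w_θ(x,y) = cos θ cos(πy) - sin θ cos(πx). Then w_θ(x, s r_θ(x)) ≥ (√2/12) π² min{x², 1/4} (1-s)². -/

import Mathlib

open Real Set

private lemma sinpi_lb_half (τ : ℝ) (h0 : 0 ≤ τ) (h1 : τ ≤ 1/2) :
    π * τ * (1 - τ) ≤ Real.sin (π * τ) := by
  have hπ3 : (3.1415:ℝ) < π := by linarith [Real.pi_gt_d6]
  have hπ4 : π < 3.1416 := by linarith [Real.pi_lt_d2, Real.pi_lt_d6]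
  rcases eq_or_lt_of_le h0 with h|h
  · simp [← h]
  rcases le_or_gt (π * τ) 1 with hx|hx
  · have hb := Real.sin_gt_sub_cube (x := π * τ) (by positivity)
    have h4 : π ≤ 4 := by linarith
    have k1 : 0 ≤ (1 - π*τ) * (π*τ*τ) :=
      mul_nonneg (by linarith) (by positivity)
    have k2 : 0 ≤ (4 - π) * (π^2*τ^3) :=
      mul_nonneg (by linarith) (by positivity)
    nlinarith [hb, k1, k2]
  · have hxle : π * τ ≤ π / 2 := by nlinarith
    have : Real.sin (π * τ) = Real.cos (π/2 - π * τ) := by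
      rw [Real.cos_pi_div_two_sub]
    rw [this]
    have hb := Real.one_sub_sq_div_two_le_cos (x := π/2 - π * τ)
    have h1π : 1 ≤ π * τ := hx.le
    nlinarith [mul_nonneg (sub_nonneg.2 h1π) (sub_nonneg.2 hxle), sq_nonneg (π*τ - 1)]

private lemma sinpi_lb (τ : ℝ) (h0 : 0 ≤ τ) (h1 : τ ≤ 1) :
    π * τ * (1 - τ) ≤ Real.sin (π * τ) := by
  rcases le_or_gt τ (1/2) with h|h
  · exact sinpi_lb_half τ h0 h
  · have h2 : π * τ = π - π * (1 - τ) := by ring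
    rw [h2, Real.sin_pi_sub]
    have := sinpi_lb_half (1 - τ) (by linarith) (by linarith)
    nlinarith [this]

private lemma polyA (r s : ℝ) (hr0 : 0 ≤ r) (hrh : r ≤ 1/2) (hs0 : 0 ≤ s) (hs1 : s ≤ 1) :
    r^2 * (1-s)^2 / 12 ≤
      (r*(1+s)/2) * (1 - r*(1+s)/2) * ((r*(1-s)/2) * (1 - r*(1-s)/2)) := by
  have k1 : 0 ≤ r * s := mul_nonneg hr0 hs0
  have k2 : 0 ≤ r * (1-s) := mul_nonneg hr0 (by linarith)
  have e1 : r/2 * (1/2) ≤ (r*(1+s)/2) * (1 - r*(1+s)/2) := by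
    apply mul_le_mul (by nlinarith) (by nlinarith) (by norm_num) (by nlinarith)
  have e2 : (r*(1-s)/2) * (3/4) ≤ (r*(1-s)/2) * (1 - r*(1-s)/2) := by
    apply mul_le_mul_of_nonneg_left (by nlinarith) (by nlinarith)
  have e3 : (r/2 * (1/2)) * ((r*(1-s)/2) * (3/4)) ≤
      (r*(1+s)/2) * (1 - r*(1+s)/2) * ((r*(1-s)/2) * (1 - r*(1-s)/2)) :=
    mul_le_mul e1 e2 (by nlinarith) (by nlinarith)
  nlinarith [e3, mul_nonneg (mul_nonneg (sq_nonneg r) (by linarith : (0:ℝ) ≤ 1-s))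
    (by linarith : (0:ℝ) ≤ 3/32 - (1-s)/12)]

set_option maxHeartbeats 1000000 in
private lemma polyB (r s : ℝ) (hrh : 1/2 ≤ r) (hr1 : r ≤ 1) (hs0 : 0 ≤ s) (hs1 : s ≤ 1) :
    (1-s)^2 / 48 ≤
      (r*(1+s)/2) * (1 - r*(1+s)/2) * ((r*(1-s)/2) * (1 - r*(1-s)/2)) := by
  have k2 : 0 ≤ (1-r) * (1-s) := mul_nonneg (by linarith) (by linarith)
  have k3 : 0 ≤ (1-r) * (1+s) := mul_nonneg (by linarith) (by linarith)
  have k4 : 0 ≤ (r - 1/2) * (1+s) := mul_nonneg (by linarith) (by linarith)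
  rcases le_total s (1/4) with hcase|hcase
  -- s ≤ 1/4, i.e. a = 1-s ≥ 3/4 : use concavity endpoints for τ1(1-τ1) ≥ 3/16
  · have c1 : (1:ℝ)/4 ≤ r*(1+s)/2 := by nlinarith
    have c2 : r*(1+s)/2 ≤ 3/4 := by nlinarith
    have e1 : (3:ℝ)/16 ≤ (r*(1+s)/2) * (1 - r*(1+s)/2) := by
      nlinarith [mul_nonneg (by linarith : (0:ℝ) ≤ r*(1+s)/2 - 1/4)
        (by linarith : (0:ℝ) ≤ 3/4 - r*(1+s)/2)]
    have e2 : (1-s)/4 * (1/2) ≤ (r*(1-s)/2) * (1 - r*(1-s)/2) := by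
      apply mul_le_mul (by nlinarith) (by nlinarith) (by norm_num) (by nlinarith)
    have e3 : (3:ℝ)/16 * ((1-s)/4 * (1/2)) ≤
        (r*(1+s)/2) * (1 - r*(1+s)/2) * ((r*(1-s)/2) * (1 - r*(1-s)/2)) :=
      mul_le_mul e1 e2 (by nlinarith) (by linarith)
    nlinarith [e3, mul_nonneg (by linarith : (0:ℝ) ≤ 1-s)
      (by linarith : (0:ℝ) ≤ 3/128 - (1-s)/48)]
  -- s ≥ 1/4, i.e. a ≤ 3/4
  · have f1 : (1+s)/4 ≤ r*(1+s)/2 := by nlinarith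
    have f2 : (1-s)/2 ≤ 1 - r*(1+s)/2 := by nlinarith [k3]
    have f3 : (1-s)/4 ≤ r*(1-s)/2 := by nlinarith
    have f4 : (1+s)/2 ≤ 1 - r*(1-s)/2 := by nlinarith [k2]
    have g1 : (0:ℝ) ≤ (1-s)/2 := by linarith
    have g2 : (0:ℝ) ≤ (1+s)/2 := by linarith
    have g3 : (0:ℝ) ≤ r*(1+s)/2 := by linarith [f1]
    have g4 : (0:ℝ) ≤ r*(1-s)/2 := by linarith [f3]
    have e1 : (1+s)/4 * ((1-s)/2) ≤ (r*(1+s)/2) * (1 - r*(1+s)/2) :=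
      mul_le_mul f1 f2 g1 g3
    have e2 : (1-s)/4 * ((1+s)/2) ≤ (r*(1-s)/2) * (1 - r*(1-s)/2) :=
      mul_le_mul f3 f4 g2 g4
    have e3 : ((1+s)/4 * ((1-s)/2)) * ((1-s)/4 * ((1+s)/2)) ≤
        (r*(1+s)/2) * (1 - r*(1+s)/2) * ((r*(1-s)/2) * (1 - r*(1-s)/2)) :=
      mul_le_mul e1 e2 (mul_nonneg (by linarith) g2) (le_trans (mul_nonneg (by linarith) g1) e1)
    have h4 : (0:ℝ) ≤ (1-s)^2 * ((1+s)^2 - 4/3) :=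
      mul_nonneg (sq_nonneg _) (by nlinarith [sq_nonneg s])
    linarith [e3, h4]

set_option maxHeartbeats 1000000 in
/-- For `θ ∈ [0, π/4]`, `s, x ∈ [0,1]` and `r = r_θ(x) ∈ [0,1]` satisfying
`cos θ · cos(π r) = sin θ · cos(π x)`, the function
`w_θ(x,y) = cos θ cos(πy) - sin θ cos(πx)` satisfies
`w_θ(x, s r) ≥ (√2/12) π² min{x², 1/4} (1-s)²`. -/
theorem stmt17 (θ s x r : ℝ)
    (hθ : θ ∈ Icc 0 (π / 4)) (hs : s ∈ Icc (0:ℝ) 1) (hx : x ∈ Icc (0:ℝ) 1)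
    (hr : r ∈ Icc (0:ℝ) 1)
    (hroot : Real.cos θ * Real.cos (π * r) = Real.sin θ * Real.cos (π * x)) :
    Real.cos θ * Real.cos (π * (s * r)) - Real.sin θ * Real.cos (π * x) ≥
      Real.sqrt 2 / 12 * π ^ 2 * min (x ^ 2) (1 / 4) * (1 - s) ^ 2 := by
  obtain ⟨hθ0, hθ4⟩ := hθ
  obtain ⟨hs0, hs1⟩ := hs
  obtain ⟨hx0, hx1⟩ := hx
  obtain ⟨hr0, hr1⟩ := hr
  have hπ := Real.pi_pos
  have hS2 : (0:ℝ) < Real.sqrt 2 := by positivity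
  -- cos θ ≥ √2/2
  have hc : Real.sqrt 2 / 2 ≤ Real.cos θ := by
    rw [← Real.cos_pi_div_four]
    exact Real.cos_le_cos_of_nonneg_of_le_pi hθ0 (by linarith) hθ4
  have hcpos : 0 < Real.cos θ := lt_of_lt_of_le (by positivity) hc
  have hsθ0 : 0 ≤ Real.sin θ := Real.sin_nonneg_of_nonneg_of_le_pi hθ0 (by linarith)
  have hsc : Real.sin θ ≤ Real.cos θ := by
    have h1 : Real.sin θ ≤ Real.sin (π/4) := by
      apply Real.strictMonoOn_sin.monotoneOn ⟨by linarith, by linarith⟩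
        ⟨by linarith, by linarith⟩ hθ4
    rw [Real.sin_pi_div_four] at h1
    linarith
  -- r ≥ min x (1/2)
  have hm : min x (1/2) ≤ r := by
    by_contra hcon
    push_neg at hcon
    set m := min x (1/2) with hmdef
    have hm0 : 0 ≤ m := le_min hx0 (by norm_num)
    have hmx : m ≤ x := min_le_left _ _
    have hmh : m ≤ 1/2 := min_le_right _ _
    have h1 : Real.cos (π * m) < Real.cos (π * r) := by
      apply Real.strictAntiOn_cos ⟨by positivity, by nlinarith⟩
        ⟨by positivity, by nlinarith⟩ (by nlinarith)
    have h2 : Real.cos (π * x) ≤ Real.cos (π * m) :=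
      Real.cos_le_cos_of_nonneg_of_le_pi (by positivity) (by nlinarith) (by nlinarith)
    have h3 : 0 ≤ Real.cos (π * m) :=
      Real.cos_nonneg_of_mem_Icc ⟨by nlinarith, by nlinarith⟩
    have h4 : Real.sin θ * Real.cos (π * x) ≤ Real.cos θ * Real.cos (π * m) :=
      le_trans (mul_le_mul_of_nonneg_left h2 hsθ0) (mul_le_mul_of_nonneg_right hsc h3)
    nlinarith [mul_lt_mul_of_pos_left h1 hcpos]
  -- product formula
  have key : Real.cos (π * (s * r)) - Real.cos (π * r)
      = 2 * Real.sin (π * (r * (1 + s) / 2)) * Real.sin (π * (r * (1 - s) / 2)) := by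
    rw [Real.cos_sub_cos]
    have e1 : (π * (s * r) + π * r) / 2 = π * (r * (1 + s) / 2) := by ring
    have e2 : (π * (s * r) - π * r) / 2 = -(π * (r * (1 - s) / 2)) := by ring
    rw [e1, e2, Real.sin_neg]
    ring
  set τ1 := r * (1 + s) / 2 with hτ1
  set τ2 := r * (1 - s) / 2 with hτ2
  have hτ10 : 0 ≤ τ1 := by
    rw [hτ1]; nlinarith [mul_nonneg hr0 (by linarith : (0:ℝ) ≤ 1 + s)]
  have hτ11 : τ1 ≤ 1 := by
    rw [hτ1]; nlinarith [mul_nonneg (by linarith : (0:ℝ) ≤ 1 - r) (by linarith : (0:ℝ) ≤ 1 + s)]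
  have hτ20 : 0 ≤ τ2 := by
    rw [hτ2]; nlinarith [mul_nonneg hr0 (by linarith : (0:ℝ) ≤ 1 - s)]
  have hτ21 : τ2 ≤ 1 := by
    rw [hτ2]; nlinarith [mul_nonneg (by linarith : (0:ℝ) ≤ 1 - r) (by linarith : (0:ℝ) ≤ 1 - s)]
  have lb1 := sinpi_lb τ1 hτ10 hτ11
  have lb2 := sinpi_lb τ2 hτ20 hτ21
  have nn1 : 0 ≤ π * τ1 * (1 - τ1) :=
    mul_nonneg (mul_nonneg hπ.le hτ10) (by linarith)
  have nn2 : 0 ≤ π * τ2 * (1 - τ2) :=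
    mul_nonneg (mul_nonneg hπ.le hτ20) (by linarith)
  have sn1 : 0 ≤ Real.sin (π * τ1) := le_trans nn1 lb1
  have sp : π * τ1 * (1 - τ1) * (π * τ2 * (1 - τ2))
      ≤ Real.sin (π * τ1) * Real.sin (π * τ2) := mul_le_mul lb1 lb2 nn2 sn1
  -- min bound
  set M := min (x ^ 2) (1/4) with hMdef
  have hM2 : M ≤ 1/4 := min_le_right _ _
  have hM1 : M ≤ r ^ 2 := by
    rcases le_total x (1/2) with h|h
    · have : min x (1/2) = x := min_eq_left h
      rw [this] at hm
      calc M ≤ x ^ 2 := min_le_left _ _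
        _ ≤ r ^ 2 := by nlinarith
    · have : min x (1/2) = 1/2 := min_eq_right h
      rw [this] at hm
      nlinarith
  -- polynomial core
  have hP : M * (1 - s) ^ 2 / 12 ≤ τ1 * (1 - τ1) * (τ2 * (1 - τ2)) := by
    rw [hτ1, hτ2]
    rcases le_total r (1/2) with h|h
    · have hp := polyA r s hr0 h hs0 hs1
      have h2 := mul_le_mul_of_nonneg_right hM1 (sq_nonneg (1-s))
      linarith
    · have hp := polyB r s h hr1 hs0 hs1
      have h2 := mul_le_mul_of_nonneg_right hM2 (sq_nonneg (1-s))
      linarith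
  -- assemble
  have step1 : Real.cos θ * Real.cos (π * (s * r)) - Real.sin θ * Real.cos (π * x)
      = Real.cos θ * (2 * Real.sin (π * τ1) * Real.sin (π * τ2)) := by
    rw [← hroot, ← key]; ring
  rw [ge_iff_le, step1]
  have hprod0 : 0 ≤ 2 * (π * τ1 * (1 - τ1)) * (π * τ2 * (1 - τ2)) := by positivity
  have step2 : Real.sqrt 2 / 2 * (2 * (π * τ1 * (1 - τ1)) * (π * τ2 * (1 - τ2)))
      ≤ Real.cos θ * (2 * Real.sin (π * τ1) * Real.sin (π * τ2)) := by
    apply mul_le_mul hc _ hprod0 hcpos.le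
    nlinarith [sp]
  refine le_trans ?_ step2
  have hS2pi : (0:ℝ) ≤ Real.sqrt 2 * π ^ 2 := by positivity
  calc Real.sqrt 2 / 12 * π ^ 2 * M * (1 - s) ^ 2
      = Real.sqrt 2 * π ^ 2 * (M * (1 - s) ^ 2 / 12) := by ring
    _ ≤ Real.sqrt 2 * π ^ 2 * (τ1 * (1 - τ1) * (τ2 * (1 - τ2))) :=
        mul_le_mul_of_nonneg_left hP hS2pi
    _ = Real.sqrt 2 / 2 * (2 * (π * τ1 * (1 - τ1)) * (π * τ2 * (1 - τ2))) := by ring
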